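/- Let G = (V,D,B) be an acyclic mixed graph, let V' ⊆ V be an ancestral subset, and let (u,v) be an edge of the induced subgraph G_{V'}. If the coefficient of (u,v) is generically identifiable in G_{V'}, then the corresponding coefficient is generically identifiable in G; that is, there is a proper algebraic subset A of Θ_G such that any two parameter pairs in Θ_G ∖ A with the same image under φ_G agree in that coefficient. -/

import Mathlib

open scoped Classical Matrix

/-- The directed part of the graph contains no directed cycle. -/
def Acyclic {n : ℕ} (D : Finset (Fin n × Fin n)) : Prop :=
  ∀ v : Fin n, ¬ Relation.TransGen (fun a b => (a, b) ∈ D) v v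

/-- Mixed graph axioms: the bidirected edge set is symmetric and there are no self loops. -/
def IsMixedGraph {n : ℕ} (D B : Finset (Fin n × Fin n)) : Prop :=
  (∀ v w : Fin n, (v, w) ∈ B → (w, v) ∈ B) ∧ ∀ v : Fin n, (v, v) ∉ D ∧ (v, v) ∉ B

/-- `IsTrek D B v w L R`: `L` is the left side of a trek from `v` to `w`, listed from the top
node down to the source `v` (consecutive vertices joined by directed edges pointing towards
`v`); `R` is the right side, listed from the top down to the target `w`.  Either the two tops
coincide (no bidirected edge) or they are joined by a bidirected edge. -/
def IsTrek {n : ℕ} (D B : Finset (Fin n × Fin n)) (v w : Fin n)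
    (L R : List (Fin n)) : Prop :=
  L ≠ [] ∧ R ≠ [] ∧
    L.Chain' (fun a b => (a, b) ∈ D) ∧ R.Chain' (fun a b => (a, b) ∈ D) ∧
    L.getLast? = some v ∧ R.getLast? = some w ∧
    (L.head? = R.head? ∨
      ∃ u z : Fin n, L.head? = some u ∧ R.head? = some z ∧ (u, z) ∈ B)

/-- Product of the matrix entries `Λ x y` over the consecutive pairs `(x, y)` of a list,
i.e. the product of the directed-edge coefficients along a directed path. -/
noncomputable def edgeProd {n : ℕ} (Λ : Matrix (Fin n) (Fin n) ℝ) :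
    List (Fin n) → ℝ
  | [] => 1
  | [_] => 1
  | x :: y :: rest => Λ x y * edgeProd Λ (y :: rest)

/-- The trek monomial of the trek with sides `L`, `R`. -/
noncomputable def trekWeight {n : ℕ} (Λ Ω : Matrix (Fin n) (Fin n) ℝ)
    (L R : List (Fin n)) : ℝ :=
  (match L.head?, R.head? with
    | some u, some z => Ω u z
    | _, _ => 0) * edgeProd Λ L * edgeProd Λ R

/-- `u` is an ancestor of `v`: there is a (possibly empty) directed path from `u` to `v`. -/
def IsAncestor {n : ℕ} (D : Finset (Fin n × Fin n)) (u v : Fin n) : Prop :=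
  Relation.ReflTransGen (fun a b => (a, b) ∈ D) u v

/-- `V'` is an ancestral subset: it contains all ancestors of its members. -/
def Ancestral {n : ℕ} (D : Finset (Fin n × Fin n)) (V' : Finset (Fin n)) : Prop :=
  ∀ u v : Fin n, IsAncestor D u v → v ∈ V' → u ∈ V'

/-- The parents of `v`. -/
def paF {n : ℕ} (D : Finset (Fin n × Fin n)) (v : Fin n) : Finset (Fin n) :=
  Finset.univ.filter fun w => (w, v) ∈ D

/-- `htr D B v`: the set of vertices `w ∉ {v} ∪ sib(v)` reachable from `v` by a half-trek. -/
def htr {n : ℕ} (D B : Finset (Fin n × Fin n)) (v : Fin n) : Set (Fin n) :=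
  {w | w ≠ v ∧ (v, w) ∉ B ∧ ∃ R, IsTrek D B v w [v] R}

/-- `Y` satisfies the half-trek criterion with respect to `v`: `|Y| = |pa(v)|`,
`Y ∩ ({v} ∪ sib(v)) = ∅`, and there is a system of half-treks with no sided intersection
from `Y` to `pa(v)` (given by a source `src p ∈ Y` and a right side `R p` for each parent
`p`, with pairwise distinct sources and pairwise disjoint right sides). -/
def SatisfiesHTC {n : ℕ} (D B : Finset (Fin n × Fin n)) (v : Fin n)
    (Y : Finset (Fin n)) : Prop :=
  Y.card = (paF D v).card ∧
    (∀ y ∈ Y, y ≠ v ∧ (y, v) ∉ B) ∧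
    ∃ (src : Fin n → Fin n) (R : Fin n → List (Fin n)),
      (∀ p ∈ paF D v, src p ∈ Y ∧ IsTrek D B (src p) p [src p] (R p)) ∧
      ∀ p ∈ paF D v, ∀ q ∈ paF D v, p ≠ q →
        src p ≠ src q ∧ ∀ x ∈ R p, x ∉ R q

/-- The parameter space `Θ = ℝ^D × PD(B)`. -/
def Theta {α : Type} [Fintype α] (D B : Set (α × α)) :
    Set (Matrix α α ℝ × Matrix α α ℝ) :=
  {p : Matrix α α ℝ × Matrix α α ℝ |
    (∀ v w : α, p.1 v w ≠ 0 → (v, w) ∈ D) ∧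
      p.2.PosDef ∧ ∀ v w : α, v ≠ w → p.2 v w ≠ 0 → (v, w) ∈ B}

/-- The parameterization map `φ(Λ, Ω) = (I - Λ)⁻ᵀ Ω (I - Λ)⁻¹`. -/
noncomputable def phi {α : Type} [Fintype α] [DecidableEq α]
    (p : Matrix α α ℝ × Matrix α α ℝ) : Matrix α α ℝ :=
  ((1 - p.1)⁻¹)ᵀ * p.2 * (1 - p.1)⁻¹

/-- Evaluation of a polynomial in the entries of the two parameter matrices. -/
noncomputable def polyEval {α : Type} [Fintype α]
    (f : MvPolynomial ((α × α) ⊕ (α × α)) ℝ)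
    (p : Matrix α α ℝ × Matrix α α ℝ) : ℝ :=
  MvPolynomial.eval (Sum.elim (fun e => p.1 e.1 e.2) (fun e => p.2 e.1 e.2)) f

/-- `A` is a proper algebraic subset of `Θ`: the intersection of `Θ` with the zero set of a
polynomial in the matrix entries that does not vanish identically on `Θ`. -/
def IsProperAlg {α : Type} [Fintype α]
    (Θ A : Set (Matrix α α ℝ × Matrix α α ℝ)) : Prop :=
  ∃ f : MvPolynomial ((α × α) ⊕ (α × α)) ℝ,
    (∃ p ∈ Θ, polyEval f p ≠ 0) ∧ A = {p ∈ Θ | polyEval f p = 0}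

/-- Generic identifiability: `φ` is injective off a proper algebraic subset. -/
def GenId {α : Type} [Fintype α] [DecidableEq α] (D B : Set (α × α)) : Prop :=
  ∃ A, IsProperAlg (Theta D B) A ∧
    ∀ p ∈ Theta D B \ A, ∀ q ∈ Theta D B \ A, phi p = phi q → p = q

/-- Generic identifiability of the single coefficient `λ_{uv}`. -/
def GenIdLambda {α : Type} [Fintype α] [DecidableEq α] (D B : Set (α × α))
    (u v : α) : Prop :=
  ∃ A, IsProperAlg (Theta D B) A ∧
    ∀ p ∈ Theta D B \ A, ∀ q ∈ Theta D B \ A, phi p = phi q → p.1 u v = q.1 u v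

/-- Generic identifiability of the single coefficient `ω_{uv}`. -/
def GenIdOmega {α : Type} [Fintype α] [DecidableEq α] (D B : Set (α × α))
    (u v : α) : Prop :=
  ∃ A, IsProperAlg (Theta D B) A ∧
    ∀ p ∈ Theta D B \ A, ∀ q ∈ Theta D B \ A, phi p = phi q → p.2 u v = q.2 u v

/-- Generic identifiability of the coefficient vector `Λ_{pa(v), v}`. -/
def GenIdCol {α : Type} [Fintype α] [DecidableEq α] (D B : Set (α × α))
    (v : α) : Prop :=
  ∃ A, IsProperAlg (Theta D B) A ∧
    ∀ p ∈ Theta D B \ A, ∀ q ∈ Theta D B \ A, phi p = phi q →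
      ∀ u : α, (u, v) ∈ D → p.1 u v = q.1 u v

/-- The fiber of the parameter point `p` within `Θ`. -/
def fiber {α : Type} [Fintype α] [DecidableEq α] (D B : Set (α × α))
    (p : Matrix α α ℝ × Matrix α α ℝ) :
    Set (Matrix α α ℝ × Matrix α α ℝ) :=
  {q ∈ Theta D B | phi q = phi p}

/-- Generically infinite-to-one. -/
def GenInfToOne {α : Type} [Fintype α] [DecidableEq α] (D B : Set (α × α)) : Prop :=
  ∃ A, IsProperAlg (Theta D B) A ∧
    ∀ p ∈ Theta D B \ A, (fiber D B p).Infinite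

/-- Generically `h`-to-one: every fiber off a proper algebraic subset has exactly `h` points. -/
def GenHToOne {α : Type} [Fintype α] [DecidableEq α] (D B : Set (α × α))
    (h : ℕ) : Prop :=
  ∃ A, IsProperAlg (Theta D B) A ∧
    ∀ p ∈ Theta D B \ A, (fiber D B p).Finite ∧ (fiber D B p).ncard = h

/-- `w` lies in the connected component of `c` in the bidirected part `(V, B)`. -/
def bidirConn {n : ℕ} (B : Finset (Fin n × Fin n)) (c w : Fin n) : Prop :=
  Relation.ReflTransGen (fun a b => (a, b) ∈ B) c w

/-- The connected component `C` of `c` in the bidirected part. -/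
noncomputable def Cset {n : ℕ} (B : Finset (Fin n × Fin n)) (c : Fin n) :
    Finset (Fin n) :=
  Finset.univ.filter (bidirConn B c)

/-- The vertex set `V_i = C_i ∪ pa(C_i)` of the mixed component of `c`. -/
noncomputable def Vset {n : ℕ} (D B : Finset (Fin n × Fin n)) (c : Fin n) :
    Finset (Fin n) :=
  Cset B c ∪ Finset.univ.filter fun v => ∃ w ∈ Cset B c, (v, w) ∈ D

/-- The directed edges `D_i = {(v, w) ∈ D : v ∈ V_i, w ∈ C_i}` of the mixed component of `c`. -/
def compD {n : ℕ} (D B : Finset (Fin n × Fin n)) (c : Fin n) :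
    Set (↥(Vset D B c) × ↥(Vset D B c)) :=
  {e | ((e.1 : Fin n), (e.2 : Fin n)) ∈ D ∧ (e.2 : Fin n) ∈ Cset B c}

/-- The bidirected edges `B_i = {(v, w) ∈ B : v, w ∈ C_i}` of the mixed component of `c`. -/
def compB {n : ℕ} (D B : Finset (Fin n × Fin n)) (c : Fin n) :
    Set (↥(Vset D B c) × ↥(Vset D B c)) :=
  {e | ((e.1 : Fin n), (e.2 : Fin n)) ∈ B ∧ (e.1 : Fin n) ∈ Cset B c ∧
    (e.2 : Fin n) ∈ Cset B c}

/-- The edges of the induced subgraph `G_{V'}`, as pairs of vertices of the subtype `V'`. -/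
def inducedE {n : ℕ} (E : Finset (Fin n × Fin n)) (V' : Finset (Fin n)) :
    Set (↥V' × ↥V') :=
  {e | ((e.1 : Fin n), (e.2 : Fin n)) ∈ E}

/-!
Acyclicity makes `I - Λ` unipotent, and since `V'` is ancestral no directed edge enters `V'`
from outside, so `I - Λ` and hence `(I - Λ)⁻¹` are block triangular with respect to `V'`.
Therefore the `V' × V'` block of `φ_G(Λ, Ω)` is `φ_{G_{V'}}` of the restricted parameters.
Restriction is a coordinate projection, so it pulls the polynomial cutting out the exceptional
set of `G_{V'}` back to a polynomial on `Θ_G`, which does not vanish identically because every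
point of `Θ_{G_{V'}}` extends to `Θ_G` (by `Λ = 0`, `Ω = 1` off `V'`). Off the pulled-back set,
equal images under `φ_G` restrict to equal images under `φ_{G_{V'}}`, hence equal coefficients.
-/

namespace Matrix

variable {α R : Type*} [Fintype α] [DecidableEq α] [CommRing R]

theorem pow_eq_zero_of_rank_lt (M : Matrix α α R) (r : α → ℕ) {N : ℕ}
    (hr : ∀ a b, M a b ≠ 0 → r a < r b) (hN : ∀ a, r a < N) : M ^ N = 0 := by
  have hrank : ∀ k x y, (M ^ k) x y ≠ 0 → r x + k ≤ r y := by
    intro k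
    induction k with
    | zero =>
      intro x y h
      rcases eq_or_ne x y with rfl | hne
      · omega
      · exact absurd (one_apply_ne hne) (by simpa using h)
    | succ k ih =>
      intro x y h
      rw [pow_succ, mul_apply] at h
      obtain ⟨z, -, hz⟩ := Finset.exists_ne_zero_of_sum_ne_zero h
      have := ih x z (left_ne_zero_of_mul hz)
      have := hr z y (right_ne_zero_of_mul hz)
      omega
  ext x y
  by_contra h
  have := hrank N x y h
  have := hN y
  omega

theorem submatrix_mul_eq_of_forall_notMem {l m k o p S : Type*} [Fintype m]
    [NonUnitalNonAssocSemiring S] (A : Matrix l m S) (B : Matrix m k S) (s : Finset m)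
    (e : o → l) (f : p → k) (h : ∀ x ∉ s, ∀ i j, A (e i) x * B x (f j) = 0) :
    (A * B).submatrix e f =
      A.submatrix e (Subtype.val : s → m) * B.submatrix (Subtype.val : s → m) f := by
  ext i j
  simp only [submatrix_apply, mul_apply]
  rw [← Finset.sum_subset (Finset.subset_univ s) (fun x _ hx => h x hx i j),
    ← Finset.sum_coe_sort s]

theorem inv_apply_eq_zero_of_forall_notMem (s : Finset α) {M : Matrix α α R} (hM : IsUnit M)
    (h : ∀ x ∉ s, ∀ a ∈ s, M x a = 0) : ∀ x ∉ s, ∀ a ∈ s, M⁻¹ x a = 0 := by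
  have := hM.invertible
  have hT : M.BlockTriangular (· ∉ s) := by
    intro i j hij
    simp only [lt_iff_le_not_ge, le_Prop_eq, Classical.not_imp, not_not] at hij
    exact h i hij.2.1 j hij.2.2
  intro x hx a ha
  exact blockTriangular_inv_of_blockTriangular hT (by simp [lt_iff_le_not_ge, hx, ha])

open scoped ComplexOrder in
theorem PosDef.fromBlocks_zero {𝕜 m n : Type*} [RCLike 𝕜] [Fintype m] [Fintype n]
    [DecidableEq m] [DecidableEq n] {A : Matrix m m 𝕜} {D : Matrix n n 𝕜}
    (hA : A.PosDef) (hD : D.PosDef) : (fromBlocks A 0 0 D).PosDef := by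
  have := hA.isUnit.invertible
  have hpsd : (fromBlocks A 0 0 D).PosSemidef := by
    simpa using (PosDef.fromBlocks₁₁ 0 D hA).2 (by simpa using hD.posSemidef)
  rw [hpsd.posDef_iff_det_ne_zero, det_fromBlocks_zero₂₁]
  exact mul_ne_zero ((isUnit_iff_isUnit_det A).1 hA.isUnit).ne_zero
    ((isUnit_iff_isUnit_det D).1 hD.isUnit).ne_zero

end Matrix

section Acyclic

variable {n : ℕ} {D : Finset (Fin n × Fin n)}

noncomputable def ancestorRank (D : Finset (Fin n × Fin n)) (v : Fin n) : ℕ :=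
  (Finset.univ.filter fun w => Relation.TransGen (fun a b => (a, b) ∈ D) w v).card

theorem ancestorRank_lt_of_mem (hacyc : Acyclic D) {a b : Fin n} (h : (a, b) ∈ D) :
    ancestorRank D a < ancestorRank D b := by
  refine Finset.card_lt_card ⟨fun w hw => ?_, fun hsub => ?_⟩
  · simp only [Finset.mem_filter, Finset.mem_univ, true_and] at hw ⊢
    exact hw.tail h
  · have : a ∈ Finset.univ.filter fun w => Relation.TransGen (fun a b => (a, b) ∈ D) w a :=
      hsub (by simpa using Relation.TransGen.single h)
    exact hacyc a (by simpa using this)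

theorem ancestorRank_lt (hacyc : Acyclic D) (v : Fin n) : ancestorRank D v < n := by
  refine (Finset.card_lt_card (Finset.ssubset_univ_iff.2 fun huniv => hacyc v ?_)).trans_eq
    (Finset.card_fin n)
  have hv : v ∈ Finset.univ.filter fun w => Relation.TransGen (fun a b => (a, b) ∈ D) w v := by
    rw [huniv]; exact Finset.mem_univ v
  exact (Finset.mem_filter.1 hv).2

theorem Acyclic.isUnit_one_sub (hacyc : Acyclic D) {Λ : Matrix (Fin n) (Fin n) ℝ}
    (hΛ : ∀ v w, Λ v w ≠ 0 → (v, w) ∈ D) : IsUnit (1 - Λ) :=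
  IsNilpotent.isUnit_one_sub ⟨n, Λ.pow_eq_zero_of_rank_lt (ancestorRank D)
    (fun a b h => ancestorRank_lt_of_mem hacyc (hΛ a b h)) (ancestorRank_lt hacyc)⟩

end Acyclic

section Restriction

variable {α : Type}

def restrictParams (s : Finset α) (p : Matrix α α ℝ × Matrix α α ℝ) :
    Matrix s s ℝ × Matrix s s ℝ :=
  (p.1.submatrix Subtype.val Subtype.val, p.2.submatrix Subtype.val Subtype.val)

/-- Extends `(Λ, Ω)` from `s` to `α` by `Λ = 0` and `Ω = 1` off `s`. -/
noncomputable def extendParams [DecidableEq α] (s : Finset α)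
    (p : Matrix s s ℝ × Matrix s s ℝ) : Matrix α α ℝ × Matrix α α ℝ :=
  let e := Equiv.sumCompl (· ∈ s)
  (Matrix.reindex e e (Matrix.fromBlocks p.1 0 0 0),
    Matrix.reindex e e (Matrix.fromBlocks p.2 0 0 1))

theorem restrictParams_extendParams [DecidableEq α] (s : Finset α)
    (p : Matrix s s ℝ × Matrix s s ℝ) :
    restrictParams s (extendParams s p) = p := by
  ext <;> simp [restrictParams, extendParams]

noncomputable def renameRestrict (s : Finset α) :
    MvPolynomial ((s × s) ⊕ (s × s)) ℝ →ₐ[ℝ] MvPolynomial ((α × α) ⊕ (α × α)) ℝ :=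
  MvPolynomial.rename
    (Sum.map (Prod.map Subtype.val Subtype.val) (Prod.map Subtype.val Subtype.val))

theorem polyEval_renameRestrict [Fintype α] (s : Finset α)
    (f : MvPolynomial ((s × s) ⊕ (s × s)) ℝ) (p : Matrix α α ℝ × Matrix α α ℝ) :
    polyEval (renameRestrict s f) p = polyEval f (restrictParams s p) := by
  simp only [polyEval, renameRestrict, MvPolynomial.eval_rename]
  congr 2
  funext e
  rcases e with e | e <;> rfl

theorem phi_restrictParams [Fintype α] [DecidableEq α] (s : Finset α) {Λ : Matrix α α ℝ}
    (Ω : Matrix α α ℝ) (hΛ : ∀ x ∉ s, ∀ a ∈ s, Λ x a = 0) (hU : IsUnit (1 - Λ)) :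
    phi (restrictParams s (Λ, Ω)) = (phi (Λ, Ω)).submatrix Subtype.val Subtype.val := by
  have hM : ∀ x ∉ s, ∀ a ∈ s, (1 - Λ) x a = 0 := fun x hx a ha => by
    simp [Matrix.one_apply_ne (ne_of_mem_of_not_mem ha hx).symm, hΛ x hx a ha]
  have hQ := Matrix.inv_apply_eq_zero_of_forall_notMem s hU hM
  have hinv : (1 - Λ)⁻¹.submatrix Subtype.val Subtype.val =
      (1 - Λ.submatrix (Subtype.val : s → α) (Subtype.val : s → α))⁻¹ := by
    refine (Matrix.inv_eq_left_inv ?_).symm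
    have hsub : (1 - Λ).submatrix (Subtype.val : s → α) Subtype.val =
        1 - Λ.submatrix (Subtype.val : s → α) (Subtype.val : s → α) := by
      ext i j
      simp [Matrix.one_apply]
    rw [← hsub, ← Matrix.submatrix_mul_eq_of_forall_notMem (1 - Λ)⁻¹ (1 - Λ) s
      (Subtype.val : s → α) (Subtype.val : s → α)
      (fun x hx i j => by rw [hM x hx j j.2, mul_zero]),
      Matrix.nonsing_inv_mul _ ((Matrix.isUnit_iff_isUnit_det _).1 hU),
      Matrix.submatrix_one _ Subtype.val_injective]
  simp only [phi, restrictParams]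
  rw [Matrix.submatrix_mul_eq_of_forall_notMem _ _ s _ _
      (fun x hx i j => by rw [hQ x hx j j.2, mul_zero]),
    Matrix.submatrix_mul_eq_of_forall_notMem _ _ s _ _
      (fun x hx i j => by rw [Matrix.transpose_apply, hQ x hx i i.2, zero_mul]),
    ← Matrix.transpose_submatrix, hinv]

end Restriction

section InducedSubgraph

variable {n : ℕ} {D B : Finset (Fin n × Fin n)} {V' : Finset (Fin n)}

theorem restrictParams_mem_theta {p : Matrix (Fin n) (Fin n) ℝ × Matrix (Fin n) (Fin n) ℝ}
    (hp : p ∈ Theta (↑D : Set (Fin n × Fin n)) ↑B) :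
    restrictParams V' p ∈ Theta (inducedE D V') (inducedE B V') :=
  ⟨fun a b h => hp.1 a b h, hp.2.1.submatrix Subtype.val_injective,
    fun a b hab h => hp.2.2 a b (Subtype.val_injective.ne hab) h⟩

theorem extendParams_mem_theta {p : Matrix V' V' ℝ × Matrix V' V' ℝ}
    (hp : p ∈ Theta (inducedE D V') (inducedE B V')) :
    extendParams V' p ∈ Theta (↑D : Set (Fin n × Fin n)) ↑B := by
  obtain ⟨hΛ, hΩ, hΩB⟩ := hp
  set e := Equiv.sumCompl (· ∈ V')
  refine ⟨fun v w h => ?_, (hΩ.fromBlocks_zero Matrix.PosDef.one).submatrix e.symm.injective,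
    fun v w hvw h => ?_⟩
  · obtain ⟨i, rfl⟩ := e.surjective v
    obtain ⟨j, rfl⟩ := e.surjective w
    rcases i with a | a <;> rcases j with b | b <;> simp [extendParams, e] at h ⊢
    exact hΛ a b h
  · obtain ⟨i, rfl⟩ := e.surjective v
    obtain ⟨j, rfl⟩ := e.surjective w
    rcases i with a | a <;> rcases j with b | b <;>
      simp [extendParams, e, Matrix.one_apply] at h hvw ⊢
    · exact hΩB a b hvw h
    · exact absurd (congrArg Subtype.val h) hvw

theorem phi_restrictParams_of_mem_theta (hacyc : Acyclic D) (hanc : Ancestral D V')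
    {p : Matrix (Fin n) (Fin n) ℝ × Matrix (Fin n) (Fin n) ℝ}
    (hp : p ∈ Theta (↑D : Set (Fin n × Fin n)) ↑B) :
    phi (restrictParams V' p) = (phi p).submatrix Subtype.val Subtype.val := by
  have hΛ : ∀ v w, p.1 v w ≠ 0 → (v, w) ∈ D := hp.1
  refine phi_restrictParams V' p.2 (fun x hx a ha => ?_) (hacyc.isUnit_one_sub hΛ)
  by_contra h
  exact hx (hanc x a (.single (hΛ x a h)) ha)

theorem IsProperAlg.preimage_restrictParams
    {A' : Set (Matrix V' V' ℝ × Matrix V' V' ℝ)}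
    (hA' : IsProperAlg (Theta (inducedE D V') (inducedE B V')) A') :
    IsProperAlg (Theta (↑D : Set (Fin n × Fin n)) ↑B)
      {p ∈ Theta (↑D : Set (Fin n × Fin n)) ↑B | restrictParams V' p ∈ A'} := by
  obtain ⟨f, ⟨p', hp', hf⟩, rfl⟩ := hA'
  refine ⟨renameRestrict V' f, ⟨extendParams V' p', extendParams_mem_theta hp', ?_⟩, ?_⟩
  · rwa [polyEval_renameRestrict, restrictParams_extendParams]
  · ext p
    simp only [Set.mem_ofPred_eq, polyEval_renameRestrict]
    exact and_congr_right fun hp => and_iff_right (restrictParams_mem_theta hp)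

end InducedSubgraph

def GenIdFun {α : Type} [Fintype α] [DecidableEq α] (D B : Set (α × α))
    (g : Matrix α α ℝ × Matrix α α ℝ → ℝ) : Prop :=
  ∃ A, IsProperAlg (Theta D B) A ∧
    ∀ p ∈ Theta D B \ A, ∀ q ∈ Theta D B \ A, phi p = phi q → g p = g q

theorem GenIdFun.of_induced {n : ℕ} {D B : Finset (Fin n × Fin n)} (hacyc : Acyclic D)
    {V' : Finset (Fin n)} (hanc : Ancestral D V')
    {g : Matrix (Fin n) (Fin n) ℝ × Matrix (Fin n) (Fin n) ℝ → ℝ}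
    {g' : Matrix V' V' ℝ × Matrix V' V' ℝ → ℝ} (hg : ∀ p, g p = g' (restrictParams V' p))
    (h : GenIdFun (inducedE D V') (inducedE B V') g') :
    GenIdFun (↑D : Set (Fin n × Fin n)) ↑B g := by
  obtain ⟨A', hA', hid⟩ := h
  have hres : ∀ p ∈ Theta (↑D : Set (Fin n × Fin n)) ↑B \
      {p ∈ Theta (↑D : Set (Fin n × Fin n)) ↑B | restrictParams V' p ∈ A'},
      restrictParams V' p ∈ Theta (inducedE D V') (inducedE B V') \ A' :=
    fun p ⟨hp, hpA⟩ => ⟨restrictParams_mem_theta hp, fun h => hpA ⟨hp, h⟩⟩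
  refine ⟨_, hA'.preimage_restrictParams, fun p hp q hq hpq => ?_⟩
  rw [hg, hg]
  refine hid _ (hres p hp) _ (hres q hq) ?_
  rw [phi_restrictParams_of_mem_theta hacyc hanc hp.1,
    phi_restrictParams_of_mem_theta hacyc hanc hq.1, hpq]

theorem stmt6_general (n : ℕ) (D B : Finset (Fin n × Fin n))
    (hacyc : Acyclic D)
    (V' : Finset (Fin n)) (hanc : Ancestral D V')
    (u v : Fin n) (hu : u ∈ V') (hv : v ∈ V') :
    ((u, v) ∈ D →
      GenIdLambda (inducedE D V') (inducedE B V') ⟨u, hu⟩ ⟨v, hv⟩ →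
        GenIdLambda (↑D : Set (Fin n × Fin n)) ↑B u v) ∧
    ((u, v) ∈ B →
      GenIdOmega (inducedE D V') (inducedE B V') ⟨u, hu⟩ ⟨v, hv⟩ →
        GenIdOmega (↑D : Set (Fin n × Fin n)) ↑B u v) :=
  ⟨fun _ => GenIdFun.of_induced (g := fun p => p.1 u v) hacyc hanc fun _ => rfl,
    fun _ => GenIdFun.of_induced (g := fun p => p.2 u v) hacyc hanc fun _ => rfl⟩

theorem stmt6 (n : ℕ) (D B : Finset (Fin n × Fin n))
    (hG : IsMixedGraph D B) (hacyc : Acyclic D)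
    (V' : Finset (Fin n)) (hanc : Ancestral D V')
    (u v : Fin n) (hu : u ∈ V') (hv : v ∈ V') :
    ((u, v) ∈ D →
      GenIdLambda (inducedE D V') (inducedE B V') ⟨u, hu⟩ ⟨v, hv⟩ →
        GenIdLambda (↑D : Set (Fin n × Fin n)) ↑B u v) ∧
    ((u, v) ∈ B →
      GenIdOmega (inducedE D V') (inducedE B V') ⟨u, hu⟩ ⟨v, hv⟩ →
        GenIdOmega (↑D : Set (Fin n × Fin n)) ↑B u v) :=
  stmt6_general n D B hacyc V' hanc u v hu hv
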